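/- (Algebraic form of Lemma 3.2.) Let n ≥ 3, let m, λ, ρ be real numbers, let Ric be a symmetric bilinear form on V with scal := Σ_i Ric(e_i,e_i), and let v ≠ 0 and p in V satisfy scal = (n−1)λ − (m−1)ρ and Ric(X,v) = ρ⟨X,v⟩ − (m/2)⟨X,p⟩ for all X ∈ V. Let (e_2,…,e_n) be an orthonormal basis of v^⊥, define h_{ab} := (1/|v|)(λ δ_{ab} − Ric(e_a,e_b)) and σ := (1/(n−1)) Σ_{a=2}^n h_{aa}. Then |D|² = (2|v|⁴/(n−2)²)·Σ_{a,b=2}^n (h_{ab} − σδ_{ab})² + (m²/(2(n−1)(n−2)))·(|p|² − ⟨p,v⟩²/|v|²); equivalently, if m ≠ 1, the last term equals (m²/(2(n−1)(n−2)(m−1)²)) times the squared norm of the component of the vector −(m−1)p (representing ∇scal) orthogonal to v. -/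

import Mathlib

/-!
The D-tensor of `v` is the sum of two wedge products `F ∧ ⟪·,·⟫` and `v ∧ b·Ric`, where
`F = a • w - c • v` and `w = ρ v - (m/2) p` represents `Ric(·, v)`. Pairing two wedges gives
`2⟨U, U'⟩⟨V, V'⟩` minus one contraction, so `|D|²` only involves `|v|`, `w`, `scal` and `|Ric|²`.
Computing `scal` and `|Ric|²` in the orthonormal basis `(v/|v|, u)` splits off the `v⊥`-block of
`Ric`, whose traceless part is `-|v|` times that of `h`; the mixed entries `Ric(u_a, v)` are the
components `-(m/2)⟪u_a, p⟫` of `-(m/2) p` orthogonal to `v` and produce the second term.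
-/

open scoped InnerProductSpace
open Finset

section FiniteSums

variable {ι : Type*} [Fintype ι]

theorem sum_wedge_mul_wedge (U U' : ι → ℝ) (V V' : ι → ι → ℝ) :
    ∑ i, ∑ j, ∑ k, (U i * V j k - U j * V i k) * (U' i * V' j k - U' j * V' i k) =
      2 * ((∑ i, U i * U' i) * (∑ j, ∑ k, V j k * V' j k)
        - ∑ k, (∑ i, U' i * V i k) * (∑ j, U j * V' j k)) := by
  set A : ι → ι → ι → ℝ := fun i j k => U i * U' i * (V j k * V' j k)
  set B : ι → ι → ι → ℝ := fun i j k => U' i * V i k * (U j * V' j k)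
  have hA : ∑ i, ∑ j, ∑ k, A i j k = (∑ i, U i * U' i) * (∑ j, ∑ k, V j k * V' j k) := by
    rw [sum_mul]; simp only [A, mul_sum]
  have hB : ∑ i, ∑ j, ∑ k, B i j k = ∑ k, (∑ i, U' i * V i k) * (∑ j, U j * V' j k) := by
    simp only [B, sum_mul_sum]
    exact (sum_congr rfl fun i _ => sum_comm).trans sum_comm
  have hswap : ∑ i, ∑ j, ∑ k, (A j i k - B j i k) = ∑ i, ∑ j, ∑ k, (A i j k - B i j k) :=
    sum_comm
  calc _ = ∑ i, ∑ j, ∑ k, ((A i j k - B i j k) + (A j i k - B j i k)) :=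
        sum_congr rfl fun i _ => sum_congr rfl fun j _ => sum_congr rfl fun k _ => by
          simp only [A, B]; ring
    _ = 2 * ∑ i, ∑ j, ∑ k, (A i j k - B i j k) := by
        simp only [sum_add_distrib, hswap]; ring
    _ = _ := by simp only [sum_sub_distrib, hA, hB]

theorem sum_sq_traceless_of_eq_mul_sub [DecidableEq ι] {M h : ι → ι → ℝ} {c t σ : ℝ}
    (hι : Fintype.card ι ≠ 0) (hh : ∀ a b, h a b = c * (t * (if a = b then 1 else 0) - M a b))
    (hσ : σ = 1 / Fintype.card ι * ∑ a, h a a) :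
    ∑ a, ∑ b, (h a b - σ * (if a = b then 1 else 0)) ^ 2
      = c ^ 2 * (∑ a, ∑ b, M a b ^ 2 - (∑ a, M a a) ^ 2 / Fintype.card ι) := by
  have hpt : ∀ a b, (h a b - σ * (if a = b then 1 else 0)) ^ 2
      = (if a = b then (c * t - σ) ^ 2 - 2 * (c * t - σ) * (c * M a a) else 0)
        + c ^ 2 * M a b ^ 2 := by
    intro a b
    rw [hh]
    split_ifs with hab
    · subst hab; ring
    · ring
  have htr : ∑ a, h a a = c * (t * Fintype.card ι - ∑ a, M a a) := by
    simp only [hh, if_true, mul_one, ← mul_sum, sum_sub_distrib, sum_const, card_univ,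
      nsmul_eq_mul]
    ring
  simp only [hpt, sum_add_distrib, sum_ite_eq, mem_univ, if_true, sum_sub_distrib, ← mul_sum,
    sum_const, card_univ, nsmul_eq_mul]
  rw [hσ, htr]
  field_simp
  ring

end FiniteSums

variable {E : Type*} [NormedAddCommGroup E] [InnerProductSpace ℝ E] {ι κ : Type*}
  [Fintype ι] [Fintype κ]

namespace OrthonormalBasis

theorem sum_inner_mul_apply (b : OrthonormalBasis ι ℝ E) (x : E) (φ : E →ₗ[ℝ] ℝ) :
    ∑ i, ⟪b i, x⟫_ℝ * φ (b i) = φ x := by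
  conv_rhs => rw [← b.sum_repr' x]
  simp only [map_sum, map_smul, smul_eq_mul]

theorem sum_inner_mul_inner' (b : OrthonormalBasis ι ℝ E) (x y : E) :
    ∑ i, ⟪b i, x⟫_ℝ * ⟪b i, y⟫_ℝ = ⟪x, y⟫_ℝ := by
  simp only [real_inner_comm x, ← b.sum_inner_mul_inner x y]

theorem sum_apply_mul_apply_eq (b : OrthonormalBasis ι ℝ E) (c : OrthonormalBasis κ ℝ E)
    (φ ψ : E →ₗ[ℝ] ℝ) : ∑ i, φ (b i) * ψ (b i) = ∑ k, φ (c k) * ψ (c k) := by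
  calc ∑ i, φ (b i) * ψ (b i) = ∑ i, ∑ k, φ (c k) * (⟪b i, c k⟫_ℝ * ψ (b i)) := by
        refine sum_congr rfl fun i _ => ?_
        rw [← c.sum_inner_mul_apply (b i) φ, sum_mul]
        refine sum_congr rfl fun k _ => ?_
        rw [real_inner_comm]; ring
    _ = ∑ k, φ (c k) * ψ (c k) := by
        rw [sum_comm]
        simp only [← mul_sum, b.sum_inner_mul_apply]

theorem sum_apply_apply_self_eq (b : OrthonormalBasis ι ℝ E) (c : OrthonormalBasis κ ℝ E)
    (B : E →ₗ[ℝ] E →ₗ[ℝ] ℝ) : ∑ i, B (b i) (b i) = ∑ k, B (c k) (c k) := by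
  calc ∑ i, B (b i) (b i) = ∑ i, ∑ k, ⟪c k, b i⟫_ℝ * B (c k) (b i) :=
        sum_congr rfl fun i _ => (c.sum_inner_mul_apply (b i) (B.flip (b i))).symm
    _ = ∑ k, B (c k) (c k) := by
        rw [sum_comm]
        refine sum_congr rfl fun k _ => ?_
        simp only [real_inner_comm (b _) (c k)]
        exact b.sum_inner_mul_apply _ _

theorem sum_sum_apply_apply_sq_eq (b : OrthonormalBasis ι ℝ E) (c : OrthonormalBasis κ ℝ E)
    (B : E →ₗ[ℝ] E →ₗ[ℝ] ℝ) :
    ∑ i, ∑ j, B (b i) (b j) ^ 2 = ∑ k, ∑ l, B (c k) (c l) ^ 2 := by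
  simp only [sq]
  calc ∑ i, ∑ j, B (b i) (b j) * B (b i) (b j)
      = ∑ i, ∑ l, B.flip (c l) (b i) * B.flip (c l) (b i) :=
        sum_congr rfl fun i _ => sum_apply_mul_apply_eq b c (B (b i)) (B (b i))
    _ = ∑ l, ∑ k, B.flip (c l) (c k) * B.flip (c l) (c k) := by
        rw [sum_comm]
        exact sum_congr rfl fun l _ => sum_apply_mul_apply_eq b c _ _
    _ = ∑ k, ∑ l, B (c k) (c l) * B (c k) (c l) := sum_comm

end OrthonormalBasis

section Projection

variable {v : E}

theorem norm_sub_inner_div_smul_sq (hv : v ≠ 0) (q : E) :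
    ‖q - (⟪q, v⟫_ℝ / ‖v‖ ^ 2) • v‖ ^ 2 = ‖q‖ ^ 2 - ⟪q, v⟫_ℝ ^ 2 / ‖v‖ ^ 2 := by
  have hv' : ‖v‖ ≠ 0 := norm_ne_zero_iff.mpr hv
  rw [norm_sub_sq_real, norm_smul, real_inner_smul_right, Real.norm_eq_abs, mul_pow, sq_abs]
  field_simp
  ring

theorem norm_sq_sub_inner_sq_div_add_smul (hv : v ≠ 0) (q : E) (r : ℝ) :
    ‖q + r • v‖ ^ 2 - ⟪q + r • v, v⟫_ℝ ^ 2 / ‖v‖ ^ 2 = ‖q‖ ^ 2 - ⟪q, v⟫_ℝ ^ 2 / ‖v‖ ^ 2 := by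
  have hv' : ‖v‖ ≠ 0 := norm_ne_zero_iff.mpr hv
  rw [norm_add_sq_real, norm_smul, inner_add_left, real_inner_smul_left, real_inner_smul_right,
    real_inner_self_eq_norm_sq, Real.norm_eq_abs, mul_pow, sq_abs]
  field_simp
  ring

theorem norm_sq_sub_inner_sq_div_smul (q : E) (r : ℝ) :
    ‖r • q‖ ^ 2 - ⟪r • q, v⟫_ℝ ^ 2 / ‖v‖ ^ 2 = r ^ 2 * (‖q‖ ^ 2 - ⟪q, v⟫_ℝ ^ 2 / ‖v‖ ^ 2) := by
  rw [norm_smul, real_inner_smul_left, Real.norm_eq_abs, mul_pow, sq_abs]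
  ring

end Projection

section AdaptedFrame

variable {B : E →ₗ[ℝ] E →ₗ[ℝ] ℝ} {v w : E} {u : κ → E}

theorem exists_orthonormalBasis_option (hv : v ≠ 0) (hu : Orthonormal ℝ u)
    (huv : ∀ a, ⟪u a, v⟫_ℝ = 0) (hdim : Fintype.card κ + 1 = Module.finrank ℝ E) :
    ∃ f : OrthonormalBasis (Option κ) ℝ E, f none = ‖v‖⁻¹ • v ∧ ∀ a, f (some a) = u a := by
  classical
  have hf : Orthonormal ℝ (fun o : Option κ => o.elim (‖v‖⁻¹ • v) u) := by
    rw [orthonormal_iff_ite]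
    rintro (_ | a) (_ | b)
    · simp [norm_smul, hv]
    · simp [real_inner_smul_left, real_inner_comm (u b) v, huv b]
    · simp [real_inner_smul_right, huv a]
    · simpa using orthonormal_iff_ite.mp hu a b
  refine ⟨OrthonormalBasis.mk hf (hf.linearIndependent.span_eq_top_of_card_eq_finrank
    (by rw [Fintype.card_option, hdim])).ge, ?_, fun a => ?_⟩ <;> simp

theorem sum_apply_apply_self_eq_of_frame (e : OrthonormalBasis ι ℝ E) (hv : v ≠ 0)
    (hu : Orthonormal ℝ u) (huv : ∀ a, ⟪u a, v⟫_ℝ = 0)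
    (hdim : Fintype.card κ + 1 = Module.finrank ℝ E) (hw : ∀ X, B X v = ⟪X, w⟫_ℝ) :
    ∑ i, B (e i) (e i) = ⟪w, v⟫_ℝ / ‖v‖ ^ 2 + ∑ a, B (u a) (u a) := by
  obtain ⟨f, hf₀, hf⟩ := exists_orthonormalBasis_option hv hu huv hdim
  have hv' : ‖v‖ ≠ 0 := norm_ne_zero_iff.mpr hv
  rw [e.sum_apply_apply_self_eq f, Fintype.sum_option, hf₀]
  simp only [hf, map_smul, LinearMap.smul_apply, hw, smul_eq_mul, real_inner_comm v w]
  field_simp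

theorem sum_sum_apply_apply_sq_eq_of_frame (e : OrthonormalBasis ι ℝ E) (hv : v ≠ 0)
    (hu : Orthonormal ℝ u) (huv : ∀ a, ⟪u a, v⟫_ℝ = 0)
    (hdim : Fintype.card κ + 1 = Module.finrank ℝ E) (hB : ∀ X Y, B X Y = B Y X)
    (hw : ∀ X, B X v = ⟪X, w⟫_ℝ) :
    ∑ i, ∑ j, B (e i) (e j) ^ 2 = (⟪w, v⟫_ℝ / ‖v‖ ^ 2) ^ 2
      + 2 * ((‖w‖ ^ 2 - ⟪w, v⟫_ℝ ^ 2 / ‖v‖ ^ 2) / ‖v‖ ^ 2) + ∑ a, ∑ b, B (u a) (u b) ^ 2 := by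
  obtain ⟨f, hf₀, hf⟩ := exists_orthonormalBasis_option hv hu huv hdim
  have hv' : ‖v‖ ≠ 0 := norm_ne_zero_iff.mpr hv
  have hperp : ∑ a, ⟪u a, w⟫_ℝ ^ 2 = ‖w‖ ^ 2 - ⟪w, v⟫_ℝ ^ 2 / ‖v‖ ^ 2 := by
    have := f.sum_inner_mul_inner' w w
    rw [Fintype.sum_option, hf₀, real_inner_self_eq_norm_sq] at this
    simp only [hf, real_inner_smul_left, ← sq] at this
    rw [real_inner_comm v w]
    field_simp at this ⊢
    linarith
  have hνu : ∀ a, B (‖v‖⁻¹ • v) (u a) = B (u a) (‖v‖⁻¹ • v) := fun a => hB _ _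
  rw [e.sum_sum_apply_apply_sq_eq f]
  simp only [Fintype.sum_option, hf₀, hf, sum_add_distrib, hνu]
  simp only [map_smul, LinearMap.smul_apply, hw, smul_eq_mul, real_inner_comm v w, mul_pow,
    ← mul_sum, hperp]
  field_simp
  ring

end AdaptedFrame

def dTensor (a b c : ℝ) (B : E →ₗ[ℝ] E →ₗ[ℝ] ℝ) (v X Y Z : E) : ℝ :=
  a * (B X v * ⟪Y, Z⟫_ℝ - B Y v * ⟪X, Z⟫_ℝ) + b * (B Y Z * ⟪X, v⟫_ℝ - B X Z * ⟪Y, v⟫_ℝ)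
    - c * (⟪X, v⟫_ℝ * ⟪Y, Z⟫_ℝ - ⟪Y, v⟫_ℝ * ⟪X, Z⟫_ℝ)

theorem sum_sq_dTensor [DecidableEq ι] (e : OrthonormalBasis ι ℝ E) {B : E →ₗ[ℝ] E →ₗ[ℝ] ℝ}
    {v w : E} (hB : ∀ X Y, B X Y = B Y X) (hw : ∀ X, B X v = ⟪X, w⟫_ℝ) (a b c : ℝ) :
    ∑ i, ∑ j, ∑ k, dTensor a b c B v (e i) (e j) (e k) ^ 2
      = 2 * (Fintype.card ι - 1) * ‖a • w - c • v‖ ^ 2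
        + 4 * b * (⟪a • w - c • v, v⟫_ℝ * ∑ i, B (e i) (e i) - ⟪a • w - c • v, w⟫_ℝ)
        + 2 * b ^ 2 * (‖v‖ ^ 2 * ∑ i, ∑ j, B (e i) (e j) ^ 2 - ‖w‖ ^ 2) := by
  set F := a • w - c • v
  set δ : ι → ι → ℝ := fun j k => if j = k then 1 else 0
  set P : ι → ι → ι → ℝ := fun i j k => ⟪e i, F⟫_ℝ * δ j k - ⟪e j, F⟫_ℝ * δ i k
  set Q : ι → ι → ι → ℝ := fun i j k =>
    ⟪e i, v⟫_ℝ * (b * B (e j) (e k)) - ⟪e j, v⟫_ℝ * (b * B (e i) (e k))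
  have hD : ∀ i j k, dTensor a b c B v (e i) (e j) (e k) = P i j k + Q i j k := by
    intro i j k
    simp only [dTensor, P, Q, δ, F, ← e.inner_eq_ite, hw, inner_sub_right, real_inner_smul_right]
    ring
  have hPP := sum_wedge_mul_wedge (fun i => ⟪e i, F⟫_ℝ) (fun i => ⟪e i, F⟫_ℝ) δ δ
  have hPQ := sum_wedge_mul_wedge (fun i => ⟪e i, F⟫_ℝ) (fun i => ⟪e i, v⟫_ℝ) δ
    (fun j k => b * B (e j) (e k))
  have hQQ := sum_wedge_mul_wedge (fun i => ⟪e i, v⟫_ℝ) (fun i => ⟪e i, v⟫_ℝ)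
    (fun j k => b * B (e j) (e k)) (fun j k => b * B (e j) (e k))
  have hB₁ : ∀ x y, ∑ j, ⟪e j, x⟫_ℝ * (b * B (e j) y) = b * B x y := fun x y => by
    rw [← LinearMap.flip_apply B x y, ← e.sum_inner_mul_apply x (B.flip y), mul_sum]
    exact sum_congr rfl fun j _ => by simp only [LinearMap.flip_apply]; ring
  have hB₂ : ∀ x y, ∑ j, ⟪e j, x⟫_ℝ * (b * B y (e j)) = b * B y x := fun x y => by
    rw [← e.sum_inner_mul_apply x (B y), mul_sum]
    exact sum_congr rfl fun j _ => by ring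
  have hBv : ∀ k, B v (e k) = ⟪e k, w⟫_ℝ := fun k => (hB _ _).trans (hw _)
  calc _ = ∑ i, ∑ j, ∑ k, P i j k * P i j k + 2 * ∑ i, ∑ j, ∑ k, P i j k * Q i j k
        + ∑ i, ∑ j, ∑ k, Q i j k * Q i j k := by
        simp only [hD, mul_sum, ← sum_add_distrib]
        exact sum_congr rfl fun i _ => sum_congr rfl fun j _ => sum_congr rfl fun k _ => by ring
    _ = _ := by
        rw [hPP, hPQ, hQQ]
        simp only [δ, mul_ite, mul_one, mul_zero, ite_mul, one_mul, zero_mul, sum_ite_eq,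
          sum_ite_eq', mem_univ, if_true, sum_const, card_univ, nsmul_eq_mul]
        simp only [hB₁, hB₂, hBv, hw, mul_mul_mul_comm b, ← mul_sum, e.sum_inner_mul_inner',
          real_inner_self_eq_norm_sq]
        simp only [← sq]
        ring

theorem sum_sq_dTensor_eq_of_frame [DecidableEq ι] {n : ℕ} (hn : 3 ≤ n)
    (e : OrthonormalBasis ι ℝ E) (hι : Fintype.card ι = n) {B : E →ₗ[ℝ] E →ₗ[ℝ] ℝ} {v w : E}
    {u : κ → E} (hu : Orthonormal ℝ u) (huv : ∀ a, ⟪u a, v⟫_ℝ = 0)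
    (hκ : Fintype.card κ + 1 = n) (hv : v ≠ 0) (hB : ∀ X Y, B X Y = B Y X)
    (hw : ∀ X, B X v = ⟪X, w⟫_ℝ) :
    ∑ i, ∑ j, ∑ k, dTensor (1 / (((n : ℝ) - 1) * ((n : ℝ) - 2))) (1 / ((n : ℝ) - 2))
        ((∑ i, B (e i) (e i)) / (((n : ℝ) - 1) * ((n : ℝ) - 2))) B v (e i) (e j) (e k) ^ 2
      = 2 * ‖v‖ ^ 2 / ((n : ℝ) - 2) ^ 2
          * (∑ a, ∑ b, B (u a) (u b) ^ 2 - (∑ a, B (u a) (u a)) ^ 2 / ((n : ℝ) - 1))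
        + 2 / (((n : ℝ) - 1) * ((n : ℝ) - 2)) * (‖w‖ ^ 2 - ⟪w, v⟫_ℝ ^ 2 / ‖v‖ ^ 2) := by
  have hdim : Fintype.card κ + 1 = Module.finrank ℝ E := by
    rw [hκ, ← hι, Module.finrank_eq_card_basis e.toBasis]
  have hv' : ‖v‖ ≠ 0 := norm_ne_zero_iff.mpr hv
  have hn' : (3 : ℝ) ≤ n := by exact_mod_cast hn
  have hn₁ : (n : ℝ) - 1 ≠ 0 := by linarith
  have hn₂ : (n : ℝ) - 2 ≠ 0 := by linarith
  rw [sum_sq_dTensor e hB hw, sum_apply_apply_self_eq_of_frame e hv hu huv hdim hw,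
    sum_sum_apply_apply_sq_eq_of_frame e hv hu huv hdim hB hw, hι]
  simp only [norm_sub_sq_real, norm_smul, inner_sub_left, real_inner_smul_left,
    real_inner_smul_right, real_inner_self_eq_norm_sq, Real.norm_eq_abs, mul_pow, sq_abs,
    real_inner_comm v w]
  field_simp
  ring

theorem stmt_5_general (n : ℕ) (hn : 3 ≤ n) (m lam rho : ℝ)
    (e : OrthonormalBasis (Fin n) ℝ (EuclideanSpace ℝ (Fin n)))
    (Ric : EuclideanSpace ℝ (Fin n) →ₗ[ℝ] EuclideanSpace ℝ (Fin n) →ₗ[ℝ] ℝ)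
    (hRicSymm : ∀ X Y, Ric X Y = Ric Y X)
    (scal : ℝ) (hscal : scal = ∑ i, Ric (e i) (e i))
    (v p : EuclideanSpace ℝ (Fin n)) (hv : v ≠ 0)
    (hRicv : ∀ X, Ric X v = rho * ⟪X, v⟫_ℝ - (m / 2) * ⟪X, p⟫_ℝ)
    (u : Fin (n - 1) → EuclideanSpace ℝ (Fin n))
    (hu : Orthonormal ℝ u) (huv : ∀ a, ⟪u a, v⟫_ℝ = 0)
    (h : Fin (n - 1) → Fin (n - 1) → ℝ)
    (hh : ∀ a b, h a b = (1 / ‖v‖) *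
      (lam * (if a = b then (1 : ℝ) else 0) - Ric (u a) (u b)))
    (σ : ℝ) (hσ : σ = (1 / ((n : ℝ) - 1)) * ∑ a, h a a)
    (D : EuclideanSpace ℝ (Fin n) → EuclideanSpace ℝ (Fin n) →
      EuclideanSpace ℝ (Fin n) → ℝ)
    (hD : ∀ X Y Z, D X Y Z =
      (1 / (((n : ℝ) - 1) * ((n : ℝ) - 2))) *
        (Ric X v * ⟪Y, Z⟫_ℝ - Ric Y v * ⟪X, Z⟫_ℝ)
      + (1 / ((n : ℝ) - 2)) * (Ric Y Z * ⟪X, v⟫_ℝ - Ric X Z * ⟪Y, v⟫_ℝ)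
      - (scal / (((n : ℝ) - 1) * ((n : ℝ) - 2))) *
          (⟪X, v⟫_ℝ * ⟪Y, Z⟫_ℝ - ⟪Y, v⟫_ℝ * ⟪X, Z⟫_ℝ)) :
    (∑ i, ∑ j, ∑ k, (D (e i) (e j) (e k)) ^ 2
      = (2 * ‖v‖ ^ 4 / ((n : ℝ) - 2) ^ 2) *
          ∑ a, ∑ b, (h a b - σ * (if a = b then (1 : ℝ) else 0)) ^ 2
        + (m ^ 2 / (2 * ((n : ℝ) - 1) * ((n : ℝ) - 2))) *
            (‖p‖ ^ 2 - ⟪p, v⟫_ℝ ^ 2 / ‖v‖ ^ 2)) ∧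
    (m ≠ 1 →
      (m ^ 2 / (2 * ((n : ℝ) - 1) * ((n : ℝ) - 2))) *
          (‖p‖ ^ 2 - ⟪p, v⟫_ℝ ^ 2 / ‖v‖ ^ 2)
        = (m ^ 2 / (2 * ((n : ℝ) - 1) * ((n : ℝ) - 2) * (m - 1) ^ 2)) *
            ‖(-(m - 1)) • p -
              (⟪(-(m - 1)) • p, v⟫_ℝ / ‖v‖ ^ 2) • v‖ ^ 2) := by
  have hv' : ‖v‖ ≠ 0 := norm_ne_zero_iff.mpr hv
  have hn' : (3 : ℝ) ≤ n := by exact_mod_cast hn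
  have hn₁ : (n : ℝ) - 1 ≠ 0 := by linarith
  have hn₂ : (n : ℝ) - 2 ≠ 0 := by linarith
  have hcard : (Fintype.card (Fin (n - 1)) : ℝ) = n - 1 := by
    rw [Fintype.card_fin, Nat.cast_sub (by omega), Nat.cast_one]
  set w := (-(m / 2)) • p + rho • v
  have hw : ∀ X, Ric X v = ⟪X, w⟫_ℝ := fun X => by
    rw [hRicv, inner_add_right, real_inner_smul_right, real_inner_smul_right]; ring
  have hperp : ‖w‖ ^ 2 - ⟪w, v⟫_ℝ ^ 2 / ‖v‖ ^ 2
      = (m / 2) ^ 2 * (‖p‖ ^ 2 - ⟪p, v⟫_ℝ ^ 2 / ‖v‖ ^ 2) := by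
    rw [norm_sq_sub_inner_sq_div_add_smul hv, norm_sq_sub_inner_sq_div_smul, neg_sq]
  refine ⟨?_, fun hm => ?_⟩
  · subst hscal
    have hD' : D = dTensor (1 / (((n : ℝ) - 1) * ((n : ℝ) - 2))) (1 / ((n : ℝ) - 2))
        ((∑ i, Ric (e i) (e i)) / (((n : ℝ) - 1) * ((n : ℝ) - 2))) Ric v :=
      funext fun X => funext fun Y => funext fun Z => hD X Y Z
    rw [hD', sum_sq_dTensor_eq_of_frame hn e (Fintype.card_fin n) hu huv (by simp; omega) hv
        hRicSymm hw, hperp, sum_sq_traceless_of_eq_mul_sub (σ := σ) (by simp; omega) hh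
        (by rwa [hcard]), hcard]
    field_simp
  · have hm' : m - 1 ≠ 0 := sub_ne_zero.mpr hm
    rw [norm_sub_inner_div_smul_sq hv, norm_sq_sub_inner_sq_div_smul, neg_sq]
    field_simp

/-- Algebraic form of Lemma 3.2: `|D|²` equals the squared norm of the traceless
second fundamental form of a level set, plus a term measuring the tangential
gradient of the scalar curvature. -/
theorem stmt_5 (n : ℕ) (hn : 3 ≤ n) (m lam rho : ℝ)
    (e : OrthonormalBasis (Fin n) ℝ (EuclideanSpace ℝ (Fin n)))
    (Ric : EuclideanSpace ℝ (Fin n) →ₗ[ℝ] EuclideanSpace ℝ (Fin n) →ₗ[ℝ] ℝ)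
    (hRicSymm : ∀ X Y, Ric X Y = Ric Y X)
    (scal : ℝ) (hscal : scal = ∑ i, Ric (e i) (e i))
    (v p : EuclideanSpace ℝ (Fin n)) (hv : v ≠ 0)
    (hscalEq : scal = ((n : ℝ) - 1) * lam - (m - 1) * rho)
    (hRicv : ∀ X, Ric X v = rho * ⟪X, v⟫_ℝ - (m / 2) * ⟪X, p⟫_ℝ)
    (u : Fin (n - 1) → EuclideanSpace ℝ (Fin n))
    (hu : Orthonormal ℝ u) (huv : ∀ a, ⟪u a, v⟫_ℝ = 0)
    (h : Fin (n - 1) → Fin (n - 1) → ℝ)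
    (hh : ∀ a b, h a b = (1 / ‖v‖) *
      (lam * (if a = b then (1 : ℝ) else 0) - Ric (u a) (u b)))
    (σ : ℝ) (hσ : σ = (1 / ((n : ℝ) - 1)) * ∑ a, h a a)
    (D : EuclideanSpace ℝ (Fin n) → EuclideanSpace ℝ (Fin n) →
      EuclideanSpace ℝ (Fin n) → ℝ)
    (hD : ∀ X Y Z, D X Y Z =
      (1 / (((n : ℝ) - 1) * ((n : ℝ) - 2))) *
        (Ric X v * ⟪Y, Z⟫_ℝ - Ric Y v * ⟪X, Z⟫_ℝ)
      + (1 / ((n : ℝ) - 2)) * (Ric Y Z * ⟪X, v⟫_ℝ - Ric X Z * ⟪Y, v⟫_ℝ)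
      - (scal / (((n : ℝ) - 1) * ((n : ℝ) - 2))) *
          (⟪X, v⟫_ℝ * ⟪Y, Z⟫_ℝ - ⟪Y, v⟫_ℝ * ⟪X, Z⟫_ℝ)) :
    (∑ i, ∑ j, ∑ k, (D (e i) (e j) (e k)) ^ 2
      = (2 * ‖v‖ ^ 4 / ((n : ℝ) - 2) ^ 2) *
          ∑ a, ∑ b, (h a b - σ * (if a = b then (1 : ℝ) else 0)) ^ 2
        + (m ^ 2 / (2 * ((n : ℝ) - 1) * ((n : ℝ) - 2))) *
            (‖p‖ ^ 2 - ⟪p, v⟫_ℝ ^ 2 / ‖v‖ ^ 2)) ∧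
    (m ≠ 1 →
      (m ^ 2 / (2 * ((n : ℝ) - 1) * ((n : ℝ) - 2))) *
          (‖p‖ ^ 2 - ⟪p, v⟫_ℝ ^ 2 / ‖v‖ ^ 2)
        = (m ^ 2 / (2 * ((n : ℝ) - 1) * ((n : ℝ) - 2) * (m - 1) ^ 2)) *
            ‖(-(m - 1)) • p -
              (⟪(-(m - 1)) • p, v⟫_ℝ / ‖v‖ ^ 2) • v‖ ^ 2) :=
  stmt_5_general n hn m lam rho e Ric hRicSymm scal hscal v p hv hRicv u hu huv h hh σ hσ D hD
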